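/- Let d_1, d_2 be unit vectors in ℂ^m, u_1, u_2 unit vectors in ℂ², and 0 ≤ p ≤ 1; write c_d = |⟨d_1, d_2⟩|² and c_u = |⟨u_1, u_2⟩|². For the two-path pure bipartite input state ψ_AB = √p · e_1 ⊗ u_1 + √(1−p) · e_2 ⊗ u_2 with reduced state ρ_A ((ρ_A)_{ik} = √(p_i p_k) ⟨u_k, u_i⟩ for the probability vector (p, 1−p)) and post-interaction bipartite state ρ̃_AB = Σ_{i,j} √(p_i p_j) ⟨d_j, d_i⟩ (e_i e_j^*) ⊗ (u_i u_j^*), one has the two identities: (P_s − 1/2)² + V(ρ̃_A)² + E(ψ_AB)² = 1/4 + p(1−p)(c_u − 1)(c_d − 1), and 3/4 − (1/2)·Tr(ρ̃_AB²) = 1/4 + p(1−p)(1 − c_d). -/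

import Mathlib

/-!
All terms are evaluated in closed form in `p`, `c_d`, `c_u`. The purities are weighted sums
`∑ p_i p_k |⟨·,·⟩|²`; for `ρ̃_AB` because it is `V N V^*` with `V : e_i ↦ e_i ⊗ u_i` an isometry,
so `Tr ρ̃_AB² = Tr N²`. The substance is Helstrom's formula `P_s = (1 + s)/2` with
`s = √(1 - 4p(1-p)c_d)`. For the upper bound, Cauchy–Schwarz for the forms `Π_1`, `Π_2` applied to
`⟨d_1, d_2⟩ = ⟨d_1, Π_1 d_2⟩ + ⟨d_1, Π_2 d_2⟩` gives `√c_d ≤ √(x(1-y)) + √((1-x)y)` for the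
success probabilities `x`, `y`; under this constraint `(2(px + (1-p)y) - 1)² ≤ s²`, the slack being
`4(p√(x(1-x)) - (1-p)√(y(1-y)))²`. The bound is attained by the projector onto the eigenvector of
`p d_1d_1^* - (1-p) d_2d_2^*` for its eigenvalue `l = (2p - 1 + s)/2 ≥ 0`, or by `Π_1 = 0` if `l = 0`.
-/

open Matrix ComplexOrder

noncomputable section

/-- Inner product ⟨a, b⟩ = ∑ i, conj (a i) * b i on a finite-dimensional complex space. -/
def ip {k : Type*} [Fintype k] (a b : k → ℂ) : ℂ := ∑ i, star (a i) * b i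

/-- The optimal success probability of minimum-error discrimination of the detector
states `d i` with prior probabilities `q i`: the supremum over all POVMs
`Pov` (positive semidefinite matrices summing to the identity) of
`∑ i, q i * ⟨d i, Pov i (d i)⟩`. -/
def Ps {m n : ℕ} (d : Fin n → Fin m → ℂ) (q : Fin n → ℝ) : ℝ :=
  sSup { x : ℝ | ∃ Pov : Fin n → Matrix (Fin m) (Fin m) ℂ,
    (∀ i, (Pov i).PosSemidef) ∧ (∑ i, Pov i) = 1 ∧
    x = ∑ i, q i * (ip (d i) ((Pov i) *ᵥ (d i))).re }

/-- The visibility `V(ρ̃_A) = √( (2(n−1)/n²) ∑_{i≠k} |⟨d_k, d_i⟩|² |(ρ_A)_{ik}|² )`. -/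
def Vis {m n : ℕ} (d : Fin n → Fin m → ℂ) (ρ : Matrix (Fin n) (Fin n) ℂ) : ℝ :=
  Real.sqrt ((2 * ((n : ℝ) - 1) / (n : ℝ) ^ 2) *
    ∑ i, ∑ k, if i = k then 0 else ‖ip (d k) (d i)‖ ^ 2 * ‖ρ i k‖ ^ 2)

/-- The post-interaction detector state `ρ̃_D = ∑ i, q i • d i (d i)^*`. -/
def detState {m n : ℕ} (d : Fin n → Fin m → ℂ) (q : Fin n → ℝ) :
    Matrix (Fin m) (Fin m) ℂ :=
  ∑ i, (q i : ℂ) • vecMulVec (d i) (star (d i))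

/-- The post-interaction particle state `(ρ̃_A)_{ik} = ⟨d_k, d_i⟩ (ρ_A)_{ik}`. -/
def post {m n : ℕ} (d : Fin n → Fin m → ℂ) (ρ : Matrix (Fin n) (Fin n) ℂ) :
    Matrix (Fin n) (Fin n) ℂ :=
  Matrix.of fun i k => ip (d k) (d i) * ρ i k

/-- The purity `Tr(ρ²)` (as a real number). -/
def purity {k : Type*} [Fintype k] (ρ : Matrix k k ℂ) : ℝ := ((ρ * ρ).trace).re

/-- Partial trace over the second tensor factor: `(Tr_B ρ)_{ik} = ∑ j, ρ_{(i,j),(k,j)}`. -/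
def ptraceB {n : ℕ} (ρ : Matrix (Fin n × Fin n) (Fin n × Fin n) ℂ) :
    Matrix (Fin n) (Fin n) ℂ :=
  Matrix.of fun i k => ∑ j, ρ (i, j) (k, j)


section Vectors

open ComplexConjugate

variable {κ : Type*} [Fintype κ]

lemma ip_eq_dotProduct (a b : κ → ℂ) : ip a b = star a ⬝ᵥ b := rfl

lemma star_ip (a b : κ → ℂ) : star (ip a b) = ip b a := by
  simp only [ip, star_sum, star_mul', star_star, mul_comm]

lemma norm_ip_comm (a b : κ → ℂ) : ‖ip b a‖ = ‖ip a b‖ := by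
  rw [← star_ip, norm_star]

lemma ip_smul_sub_smul_left (α β : ℂ) (a b x : κ → ℂ) :
    ip (α • a - β • b) x = conj α * ip a x - conj β * ip b x := by
  simp only [ip_eq_dotProduct, star_sub, star_smul, sub_dotProduct, smul_dotProduct, smul_eq_mul,
    Complex.star_def]

lemma ip_smul_mulVec (z : ℂ) (M : Matrix κ κ ℂ) (x y : κ → ℂ) :
    ip x ((z • M) *ᵥ y) = z * ip x (M *ᵥ y) := by
  rw [ip_eq_dotProduct, smul_mulVec, dotProduct_smul, smul_eq_mul, ip_eq_dotProduct]

lemma ip_vecMulVec_mulVec (x v y : κ → ℂ) :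
    ip x (vecMulVec v (star v) *ᵥ y) = ip x v * ip v y := by
  rw [vecMulVec_mulVec, op_smul_eq_smul, ip_eq_dotProduct, dotProduct_smul, smul_eq_mul, mul_comm]
  rfl

lemma ip_mulVec_add_ip_mulVec [DecidableEq κ] {P Q : Matrix κ κ ℂ} (hPQ : P + Q = 1)
    (a b : κ → ℂ) : ip a (P *ᵥ b) + ip a (Q *ᵥ b) = ip a b := by
  rw [ip_eq_dotProduct, ip_eq_dotProduct, ip_eq_dotProduct, ← dotProduct_add, ← add_mulVec, hPQ,
    one_mulVec]

lemma norm_ip_mulVec_sq_le {M : Matrix κ κ ℂ} (hM : M.PosSemidef) (a b : κ → ℂ) :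
    ‖ip a (M *ᵥ b)‖ ^ 2 ≤ (ip a (M *ᵥ a)).re * (ip b (M *ᵥ b)).re := by
  let := M.toSeminormedAddCommGroup hM
  let := M.toInnerProductSpace hM
  have hinner : ∀ x y : κ → ℂ, inner ℂ x y = ip x (M *ᵥ y) := fun x y => dotProduct_comm _ _
  have h := inner_mul_inner_self_le (𝕜 := ℂ) a b
  rw [norm_inner_symm b a, hinner, hinner, hinner] at h
  simpa [sq] using h

lemma norm_ip_sq_le (a b : κ → ℂ) : ‖ip a b‖ ^ 2 ≤ (ip a a).re * (ip b b).re := by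
  classical
  simpa using norm_ip_mulVec_sq_le PosSemidef.one a b

lemma norm_ip_sq_le_one {a b : κ → ℂ} (ha : ip a a = 1) (hb : ip b b = 1) :
    ‖ip a b‖ ^ 2 ≤ 1 := by
  simpa [ha, hb] using norm_ip_sq_le a b

lemma sq_two_mul_sub_one_le_one_sub_four_mul_norm_ip_sq {a b : κ → ℂ} (ha : ip a a = 1)
    (hb : ip b b = 1) {p : ℝ} (hp0 : 0 ≤ p) (hp1 : p ≤ 1) :
    (2 * p - 1) ^ 2 ≤ 1 - 4 * p * (1 - p) * ‖ip a b‖ ^ 2 := by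
  nlinarith [mul_nonneg (mul_nonneg hp0 (sub_nonneg.2 hp1)) (sub_nonneg.2 (norm_ip_sq_le_one ha hb))]

lemma isStarProjection_smul_vecMulVec {v : κ → ℂ} (hv : ip v v ≠ 0) :
    IsStarProjection ((ip v v)⁻¹ • vecMulVec v (star v)) where
  isIdempotentElem := by
    rw [IsIdempotentElem, smul_mul_smul_comm, vecMulVec_mul_vecMulVec, ← ip_eq_dotProduct,
      vecMulVec_smul, smul_smul, mul_assoc, inv_mul_cancel₀ hv, mul_one]
  isSelfAdjoint := by
    rw [IsSelfAdjoint, star_smul, star_inv₀, star_ip, star_eq_conjTranspose,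
      conjTranspose_vecMulVec, star_star]

open MatrixOrder in
lemma IsStarProjection.posSemidef {P : Matrix κ κ ℂ} (hP : IsStarProjection P) :
    P.PosSemidef :=
  nonneg_iff_posSemidef.mp hP.nonneg

end Vectors

lemma sq_add_mul_sq_sqrt_add_sqrt_le_one (p : ℝ) {x y : ℝ} (hx0 : 0 ≤ x) (hx1 : x ≤ 1)
    (hy0 : 0 ≤ y) (hy1 : y ≤ 1) :
    (2 * (p * x + (1 - p) * y) - 1) ^ 2
      + 4 * p * (1 - p) * (√(x * (1 - y)) + √((1 - x) * y)) ^ 2 ≤ 1 := by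
  have hu := Real.sq_sqrt (show 0 ≤ x * (1 - y) by nlinarith)
  have hw := Real.sq_sqrt (show 0 ≤ (1 - x) * y by nlinarith)
  have ha := Real.sq_sqrt (show 0 ≤ x * (1 - x) by nlinarith)
  have hb := Real.sq_sqrt (show 0 ≤ y * (1 - y) by nlinarith)
  have hprod : √(x * (1 - y)) * √((1 - x) * y) = √(x * (1 - x)) * √(y * (1 - y)) := by
    rw [← Real.sqrt_mul (by nlinarith), ← Real.sqrt_mul (by nlinarith)]
    ring_nf
  have hslack : 1 - ((2 * (p * x + (1 - p) * y) - 1) ^ 2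
      + 4 * p * (1 - p) * (√(x * (1 - y)) + √((1 - x) * y)) ^ 2)
      = 4 * (p * √(x * (1 - x)) - (1 - p) * √(y * (1 - y))) ^ 2 := by
    linear_combination (-4 * p * (1 - p)) * hu + (-4 * p * (1 - p)) * hw
      + (-8 * p * (1 - p)) * hprod + (-4 * p ^ 2) * ha + (-4 * (1 - p) ^ 2) * hb
  linarith [sq_nonneg (p * √(x * (1 - x)) - (1 - p) * √(y * (1 - y)))]

lemma weighted_add_le_of_le_sqrt_add_sqrt {p x y F : ℝ} (hp0 : 0 ≤ p) (hp1 : p ≤ 1)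
    (hx0 : 0 ≤ x) (hx1 : x ≤ 1) (hy0 : 0 ≤ y) (hy1 : y ≤ 1) (hF0 : 0 ≤ F)
    (hF : F ≤ √(x * (1 - y)) + √((1 - x) * y)) :
    p * x + (1 - p) * y ≤ (1 + √(1 - 4 * p * (1 - p) * F ^ 2)) / 2 := by
  suffices h : 2 * (p * x + (1 - p) * y) - 1 ≤ √(1 - 4 * p * (1 - p) * F ^ 2) by linarith
  refine Real.le_sqrt_of_sq_le ?_
  have hpq : 0 ≤ 4 * p * (1 - p) := by nlinarith
  have hF2 := mul_le_mul_of_nonneg_left (pow_le_pow_left₀ hF0 hF 2) hpq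
  nlinarith [sq_add_mul_sq_sqrt_add_sqrt_le_one p hx0 hx1 hy0 hy1]

section Helstrom

open ComplexConjugate

variable {κ : Type*} [Fintype κ] [DecidableEq κ] {a b : κ → ℂ}

lemma success_le_helstrom (ha : ip a a = 1) (hb : ip b b = 1) {P Q : Matrix κ κ ℂ}
    (hP : P.PosSemidef) (hQ : Q.PosSemidef) (hPQ : P + Q = 1) {p : ℝ} (hp0 : 0 ≤ p)
    (hp1 : p ≤ 1) :
    p * (ip a (P *ᵥ a)).re + (1 - p) * (ip b (Q *ᵥ b)).re
      ≤ (1 + √(1 - 4 * p * (1 - p) * ‖ip a b‖ ^ 2)) / 2 := by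
  set x := (ip a (P *ᵥ a)).re
  set y := (ip b (Q *ᵥ b)).re
  have hxQ : (ip a (Q *ᵥ a)).re = 1 - x := by
    have h := congrArg Complex.re (ip_mulVec_add_ip_mulVec hPQ a a)
    rw [ha, Complex.add_re, Complex.one_re] at h
    linarith
  have hyP : (ip b (P *ᵥ b)).re = 1 - y := by
    have h := congrArg Complex.re (ip_mulVec_add_ip_mulVec hPQ b b)
    rw [hb, Complex.add_re, Complex.one_re] at h
    linarith
  have hx0 : 0 ≤ x := hP.re_dotProduct_nonneg a
  have hy0 : 0 ≤ y := hQ.re_dotProduct_nonneg b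
  have hx1 : 0 ≤ 1 - x := hxQ ▸ hQ.re_dotProduct_nonneg a
  have hy1 : 0 ≤ 1 - y := hyP ▸ hP.re_dotProduct_nonneg b
  refine weighted_add_le_of_le_sqrt_add_sqrt hp0 hp1 hx0 (by linarith) hy0 (by linarith)
    (norm_nonneg _) ?_
  calc ‖ip a b‖ = ‖ip a (P *ᵥ b) + ip a (Q *ᵥ b)‖ := by rw [ip_mulVec_add_ip_mulVec hPQ]
    _ ≤ ‖ip a (P *ᵥ b)‖ + ‖ip a (Q *ᵥ b)‖ := norm_add_le _ _
    _ ≤ √(x * (1 - y)) + √((1 - x) * y) := by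
      gcongr
      · exact Real.le_sqrt_of_sq_le ((norm_ip_mulVec_sq_le hP a b).trans_eq (by rw [hyP]))
      · exact Real.le_sqrt_of_sq_le ((norm_ip_mulVec_sq_le hQ a b).trans_eq (by rw [hxQ]))

lemma exists_projective_povm_success_eq {v : κ → ℂ} {D : ℝ} (hv : ip v v = D) (hD : D ≠ 0)
    (hb : ip b b = 1) (p : ℝ) :
    ∃ P Q : Matrix κ κ ℂ, P.PosSemidef ∧ Q.PosSemidef ∧ P + Q = 1 ∧
      p * (ip a (P *ᵥ a)).re + (1 - p) * (ip b (Q *ᵥ b)).re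
        = p * (‖ip v a‖ ^ 2 / D) + (1 - p) * (1 - ‖ip v b‖ ^ 2 / D) := by
  have hproj := isStarProjection_smul_vecMulVec (hv ▸ Complex.ofReal_ne_zero.2 hD)
  set P := (ip v v)⁻¹ • vecMulVec v (star v)
  have hP : ∀ x, ip x (P *ᵥ x) = ((‖ip v x‖ ^ 2 / D : ℝ) : ℂ) := fun x => by
    rw [ip_smul_mulVec, ip_vecMulVec_mulVec, ← star_ip v x, Complex.star_def, Complex.conj_mul', hv]
    push_cast
    ring
  have hQb : ip b ((1 - P) *ᵥ b) = ((1 - ‖ip v b‖ ^ 2 / D : ℝ) : ℂ) := by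
    rw [Complex.ofReal_sub, ← hP, Complex.ofReal_one, ← hb,
      ← ip_mulVec_add_ip_mulVec (add_sub_cancel P 1) b b, add_sub_cancel_left]
  refine ⟨P, 1 - P, hproj.posSemidef, hproj.one_sub.posSemidef, add_sub_cancel P 1, ?_⟩
  rw [hP, hQb, Complex.ofReal_re, Complex.ofReal_re]

lemma exists_povm_success_eq_of_root (ha : ip a a = 1) (hb : ip b b = 1) {p l : ℝ}
    (hp1 : p ≤ 1) (hl : 0 < l)
    (hroot : l ^ 2 = (2 * p - 1) * l + p * (1 - p) * (1 - ‖ip a b‖ ^ 2)) :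
    ∃ P Q : Matrix κ κ ℂ, P.PosSemidef ∧ Q.PosSemidef ∧ P + Q = 1 ∧
      p * (ip a (P *ᵥ a)).re + (1 - p) * (ip b (Q *ᵥ b)).re = 1 - p + l := by
  set g := ip a b
  set c := ‖g‖ ^ 2
  set q := 1 - p
  have hgg : conj g * g = (c : ℂ) := by rw [Complex.conj_mul', Complex.ofReal_pow]
  have hba : ip b a = conj g := (star_ip a b).symm
  -- an eigenvector of `p a a^* - q b b^*` for the eigenvalue `l`
  set v : κ → ℂ := ((l + q : ℝ) : ℂ) • a - ((q : ℂ) * conj g) • b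
  have hva : ip v a = ((l + q - q * c : ℝ) : ℂ) := by
    rw [ip_smul_sub_smul_left, ha, hba]
    simp only [map_mul, Complex.conj_ofReal, Complex.conj_conj]
    push_cast
    linear_combination (-(q : ℂ)) * hgg
  have hvb : ip v b = (l : ℂ) * g := by
    rw [ip_smul_sub_smul_left, hb]
    simp only [map_mul, Complex.conj_ofReal, Complex.conj_conj]
    push_cast
    ring
  set D := l ^ 2 + q * (1 - c) * (2 * l + q)
  have hvv : ip v v = D := by
    rw [ip_smul_sub_smul_left, ← star_ip v a, ← star_ip v b, hva, hvb]
    simp only [D, Complex.star_def, map_mul, Complex.conj_ofReal, Complex.conj_conj]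
    push_cast
    linear_combination -(l : ℂ) * q * hgg
  have hD : 0 < D := by
    have : 0 ≤ q * (1 - c) * (2 * l + q) := by
      have := sub_nonneg.2 (norm_ip_sq_le_one ha hb)
      have : 0 ≤ q := by simp only [q]; linarith
      positivity
    positivity
  obtain ⟨P, Q, hP, hQ, hPQ, hval⟩ := exists_projective_povm_success_eq hvv hD.ne' hb p
  refine ⟨P, Q, hP, hQ, hPQ, hval.trans ?_⟩
  rw [hva, hvb, Complex.norm_real, norm_mul, Complex.norm_real, mul_pow, Real.norm_eq_abs,
    Real.norm_eq_abs, sq_abs, sq_abs]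
  field_simp
  linear_combination (-l - q * (1 - c)) * hroot

lemma exists_povm_success_eq_helstrom (ha : ip a a = 1) (hb : ip b b = 1) {p : ℝ}
    (hp0 : 0 ≤ p) (hp1 : p ≤ 1) :
    ∃ P Q : Matrix κ κ ℂ, P.PosSemidef ∧ Q.PosSemidef ∧ P + Q = 1 ∧
      p * (ip a (P *ᵥ a)).re + (1 - p) * (ip b (Q *ᵥ b)).re
        = (1 + √(1 - 4 * p * (1 - p) * ‖ip a b‖ ^ 2)) / 2 := by
  set c := ‖ip a b‖ ^ 2
  set s := √(1 - 4 * p * (1 - p) * c)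
  have hdisc : (2 * p - 1) ^ 2 ≤ 1 - 4 * p * (1 - p) * c :=
    sq_two_mul_sub_one_le_one_sub_four_mul_norm_ip_sq ha hb hp0 hp1
  have hs : s ^ 2 = 1 - 4 * p * (1 - p) * c := Real.sq_sqrt ((sq_nonneg _).trans hdisc)
  have hl0 : 0 ≤ (2 * p - 1 + s) / 2 := by linarith [(abs_le.1 (Real.abs_le_sqrt hdisc)).1]
  have hroot : ((2 * p - 1 + s) / 2) ^ 2
      = (2 * p - 1) * ((2 * p - 1 + s) / 2) + p * (1 - p) * (1 - c) := by
    linear_combination hs / 4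
  rcases hl0.eq_or_lt with hl | hl
  · refine ⟨0, 1, .zero, .one, zero_add 1, ?_⟩
    rw [zero_mulVec, one_mulVec, hb, ip_eq_dotProduct, dotProduct_zero, Complex.zero_re,
      Complex.one_re]
    linarith
  · obtain ⟨P, Q, hP, hQ, hPQ, hval⟩ := exists_povm_success_eq_of_root ha hb hp1 hl hroot
    exact ⟨P, Q, hP, hQ, hPQ, hval.trans (by ring)⟩

end Helstrom

theorem Ps_eq_helstrom {m : ℕ} {d : Fin 2 → Fin m → ℂ} (hd : ∀ i, ip (d i) (d i) = 1) {p : ℝ}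
    (hp0 : 0 ≤ p) (hp1 : p ≤ 1) :
    Ps d ![p, 1 - p] = (1 + √(1 - 4 * p * (1 - p) * ‖ip (d 0) (d 1)‖ ^ 2)) / 2 := by
  refine IsGreatest.csSup_eq ⟨?_, ?_⟩
  · obtain ⟨P, Q, hP, hQ, hPQ, hval⟩ := exists_povm_success_eq_helstrom (hd 0) (hd 1) hp0 hp1
    refine ⟨![P, Q], fun i => ?_, by simpa [Fin.sum_univ_two] using hPQ, ?_⟩
    · fin_cases i
      exacts [hP, hQ]
    · simpa [Fin.sum_univ_two] using hval.symm
  · rintro x ⟨Pov, hPov, hsum, rfl⟩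
    simpa [Fin.sum_univ_two] using success_le_helstrom (hd 0) (hd 1) (hPov 0) (hPov 1)
      (by simpa [Fin.sum_univ_two] using hsum) hp0 hp1

lemma Vis_two_sq {m : ℕ} (d : Fin 2 → Fin m → ℂ) (ρ : Matrix (Fin 2) (Fin 2) ℂ) :
    Vis d ρ ^ 2
      = (‖ip (d 1) (d 0)‖ ^ 2 * ‖ρ 0 1‖ ^ 2 + ‖ip (d 0) (d 1)‖ ^ 2 * ‖ρ 1 0‖ ^ 2) / 2 := by
  have h : (2 * (((2 : ℕ) : ℝ) - 1) / ((2 : ℕ) : ℝ) ^ 2) *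
      ∑ i : Fin 2, ∑ k, (if i = k then 0 else ‖ip (d k) (d i)‖ ^ 2 * ‖ρ i k‖ ^ 2)
      = (‖ip (d 1) (d 0)‖ ^ 2 * ‖ρ 0 1‖ ^ 2 + ‖ip (d 0) (d 1)‖ ^ 2 * ‖ρ 1 0‖ ^ 2) / 2 := by
    simp only [Nat.cast_ofNat, Fin.sum_univ_two, Fin.isValue, ↓reduceIte, zero_ne_one, zero_add,
      one_ne_zero, add_zero]
    ring
  rw [Vis, h, Real.sq_sqrt (by positivity)]

lemma norm_sq_sqrt_mul_ip {ι κ : Type*} [Fintype κ] {w : ι → ℝ} (hw : ∀ i, 0 ≤ w i)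
    (u : ι → κ → ℂ) (i k : ι) :
    ‖(√(w i * w k) : ℂ) * ip (u k) (u i)‖ ^ 2 = w i * w k * ‖ip (u i) (u k)‖ ^ 2 := by
  rw [norm_mul, mul_pow, Complex.norm_real, Real.norm_eq_abs, sq_abs,
    Real.sq_sqrt (mul_nonneg (hw i) (hw k)), norm_ip_comm]

section States

variable {ι κ : Type*} [Fintype ι] [Fintype κ]

lemma purity_of_sqrt_mul_ip {w : ι → ℝ} (hw : ∀ i, 0 ≤ w i) (u : ι → κ → ℂ) :
    purity (of fun i k => (√(w i * w k) : ℂ) * ip (u k) (u i))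
      = ∑ i, ∑ k, w i * w k * ‖ip (u i) (u k)‖ ^ 2 := by
  have hterm : ∀ i k, (√(w i * w k) : ℂ) * ip (u k) (u i) * ((√(w k * w i) : ℂ) * ip (u i) (u k))
      = ((w i * w k * ‖ip (u i) (u k)‖ ^ 2 : ℝ) : ℂ) := by
    intro i k
    rw [mul_comm (w k), ← star_ip (u i) (u k), Complex.star_def, mul_mul_mul_comm,
      ← Complex.ofReal_mul, Real.mul_self_sqrt (mul_nonneg (hw i) (hw k)), Complex.conj_mul']
    push_cast
    ring
  simp only [purity, trace, diag_apply, mul_apply, of_apply, hterm, Complex.re_sum,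
    Complex.ofReal_re]

lemma purity_of_mul_mul_star [DecidableEq ι] (N : Matrix ι ι ℂ) {u : ι → κ → ℂ}
    (hu : ∀ i, ip (u i) (u i) = 1) :
    purity (of fun x y : ι × κ => N x.1 y.1 * u x.1 x.2 * star (u y.1 y.2)) = purity N := by
  set V : Matrix (ι × κ) ι ℂ := of fun x j => if x.1 = j then u j x.2 else 0
  have hVV : Vᴴ * V = 1 := by
    ext i j
    rcases eq_or_ne i j with rfl | hij
    · simpa [V, mul_apply, Fintype.sum_prod_type, ip] using hu i
    · simp [V, mul_apply, Fintype.sum_prod_type, hij, Ne.symm hij]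
  have hM : (of fun x y : ι × κ => N x.1 y.1 * u x.1 x.2 * star (u y.1 y.2)) = V * N * Vᴴ := by
    ext x y
    simp only [V, of_apply, mul_apply, conjTranspose_apply, apply_ite star, star_zero, mul_ite,
      mul_zero, Finset.sum_ite_eq, Finset.mem_univ, if_true, ite_mul, zero_mul]
    ring
  have hcycle : V * N * Vᴴ * (V * N * Vᴴ) = V * (N * (Vᴴ * V) * N * Vᴴ) := by
    simp only [Matrix.mul_assoc]
  rw [purity, purity, hM, hcycle, trace_mul_comm, Matrix.mul_assoc _ Vᴴ V, hVV, Matrix.mul_one,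
    Matrix.mul_one]

lemma sum_fin_two_mul_norm_ip_sq {v : Fin 2 → κ → ℂ} (hv : ∀ i, ip (v i) (v i) = 1) (p : ℝ) :
    ∑ i, ∑ k, ![p, 1 - p] i * ![p, 1 - p] k * ‖ip (v i) (v k)‖ ^ 2
      = 1 - 2 * p * (1 - p) * (1 - ‖ip (v 0) (v 1)‖ ^ 2) := by
  simp only [Fin.sum_univ_two, cons_val_zero, cons_val_one, cons_val_fin_one, hv, norm_one, one_pow,
    mul_one, norm_ip_comm (v 0) (v 1)]
  ring

end States

lemma ptraceB_vecMulVec {n : ℕ} {w : Fin n → ℝ} (hw : ∀ i, 0 ≤ w i) (u : Fin n → Fin n → ℂ) :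
    ptraceB (vecMulVec (fun x => (√(w x.1) : ℂ) * u x.1 x.2)
        (star fun x => (√(w x.1) : ℂ) * u x.1 x.2))
      = of fun i k => (√(w i * w k) : ℂ) * ip (u k) (u i) := by
  ext i k
  simp only [ptraceB, of_apply, vecMulVec_apply, Pi.star_apply, ip, Finset.mul_sum, star_mul',
    Complex.star_def, Complex.conj_ofReal, Real.sqrt_mul (hw i), Complex.ofReal_mul]
  exact Finset.sum_congr rfl fun j _ => by ring

/-- explicit evaluation of the two sides of the triality relation for the
two-path pure bipartite input state `ψ_AB = √p e₁ ⊗ u₁ + √(1−p) e₂ ⊗ u₂`. -/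
theorem stmt17 (m : ℕ) (d : Fin 2 → Fin m → ℂ)
    (hd : ∀ i, ip (d i) (d i) = 1)
    (u : Fin 2 → Fin 2 → ℂ) (hu : ∀ i, ip (u i) (u i) = 1)
    (p : ℝ) (hp0 : 0 ≤ p) (hp1 : p ≤ 1)
    (cd cu : ℝ) (hcd : cd = ‖ip (d 0) (d 1)‖ ^ 2) (hcu : cu = ‖ip (u 0) (u 1)‖ ^ 2)
    -- the prior probability vector (p, 1 − p)
    (pv : Fin 2 → ℝ) (hpv : pv = ![p, 1 - p])
    -- the pure bipartite input state ψ_AB = √p e₁ ⊗ u₁ + √(1−p) e₂ ⊗ u₂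
    (ψ : Fin 2 × Fin 2 → ℂ) (hψ : ψ = fun x => (Real.sqrt (pv x.1) : ℂ) * u x.1 x.2)
    -- the reduced state of the particle
    (ρA : Matrix (Fin 2) (Fin 2) ℂ)
    (hρA : ρA = Matrix.of fun i k => (Real.sqrt (pv i * pv k) : ℂ) * ip (u k) (u i))
    -- the normalized concurrence squared E(ψ_AB)² = (1/2)(1 − Tr((Tr_B ψψ^*)²))
    (Esq : ℝ) (hE : Esq = (1 / 2) * (1 - purity (ptraceB (vecMulVec ψ (star ψ)))))
    -- the post-interaction bipartite state
    (ρtAB : Matrix (Fin 2 × Fin 2) (Fin 2 × Fin 2) ℂ)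
    (hρtAB : ρtAB = Matrix.of fun x y =>
      (Real.sqrt (pv x.1 * pv y.1) : ℂ) * ip (d y.1) (d x.1) * u x.1 x.2 * star (u y.1 y.2)) :
    (Ps d pv - 1 / 2) ^ 2 + (Vis d ρA) ^ 2 + Esq
        = 1 / 4 + p * (1 - p) * (cu - 1) * (cd - 1) ∧
      3 / 4 - (1 / 2) * purity ρtAB = 1 / 4 + p * (1 - p) * (1 - cd) := by
  subst hpv hψ hρA hE hρtAB hcd hcu
  have hw : ∀ i, 0 ≤ ![p, 1 - p] i := fun i => by fin_cases i <;> simp [hp0, hp1]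
  have hdisc : 0 ≤ 1 - 4 * p * (1 - p) * ‖ip (d 0) (d 1)‖ ^ 2 :=
    (sq_nonneg _).trans (sq_two_mul_sub_one_le_one_sub_four_mul_norm_ip_sq (hd 0) (hd 1) hp0 hp1)
  constructor
  · rw [Ps_eq_helstrom hd hp0 hp1, Vis_two_sq, of_apply, of_apply, norm_sq_sqrt_mul_ip hw,
      norm_sq_sqrt_mul_ip hw, ptraceB_vecMulVec hw, purity_of_sqrt_mul_ip hw,
      sum_fin_two_mul_norm_ip_sq hu, norm_ip_comm (d 0), norm_ip_comm (u 0)]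
    simp only [cons_val_zero, cons_val_one, cons_val_fin_one]
    linear_combination Real.sq_sqrt hdisc / 4
  · have hpurAB := purity_of_mul_mul_star
      (of fun i k => (√(![p, 1 - p] i * ![p, 1 - p] k) : ℂ) * ip (d k) (d i)) hu
    simp only [of_apply] at hpurAB
    rw [hpurAB, purity_of_sqrt_mul_ip hw, sum_fin_two_mul_norm_ip_sq hd]
    ring
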